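/- Let c1 > 0 and c2 > 0 and consider the two-player game Γ_2^c in which player 1 has actions {a1,a2,a3}, player 2 has actions {b1,b2,b3}, and payoffs (u_1,u_2) are: (a1,b1)↦(1,1), (a1,b2)↦(0,0), (a1,b3)↦(−7−c1,−7−c2), (a2,b1)↦(0,0), (a2,b2)↦(0,0), (a2,b3)↦(−7,−7), (a3,b1)↦(−7−c1,−7−c2), (a3,b2)↦(−7,−7), (a3,b3)↦(−7,−7). Then the set of perfect equilibria of Γ_2^c and the set of undominated Nash equilibria of Γ_2^c both equal {(a1,b1), (a2,b2)}. -/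
import Mathlib


open Filter Topology

section GameDefs

variable {N : Type} [Fintype N] [DecidableEq N] {A : N → Type}
  [∀ i, Fintype (A i)] [∀ i, DecidableEq (A i)]

/-- A mixed-strategy profile: each `σ i` is a probability distribution on `A i`. -/
def IsStrategy (σ : ∀ i, A i → ℝ) : Prop :=
  (∀ i a, 0 ≤ σ i a) ∧ ∀ i, ∑ a, σ i a = 1

/-- An interior profile places positive probability on every action. -/
def Interior (σ : ∀ i, A i → ℝ) : Prop :=
  ∀ i a, 0 < σ i a

/-- Expected utility of player `i` at profile `σ`. -/
noncomputable def expUtil (u : ∀ i : N, (∀ j, A j) → ℝ) (σ : ∀ i, A i → ℝ) (i : N) : ℝ :=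
  ∑ a : ∀ j, A j, u i a * ∏ j, σ j (a j)

/-- Expected utility of player `i` from playing action `ai` against `σ₋ᵢ`. -/
noncomputable def devUtil (u : ∀ i : N, (∀ j, A j) → ℝ) (σ : ∀ i, A i → ℝ)
    (i : N) (ai : A i) : ℝ :=
  expUtil u (Function.update σ i (fun b => if b = ai then (1 : ℝ) else 0)) i

/-- Nash equilibrium. -/
def IsNash (u : ∀ i : N, (∀ j, A j) → ℝ) (σ : ∀ i, A i → ℝ) : Prop :=
  IsStrategy σ ∧ ∀ (i : N) (μ : A i → ℝ), (∀ a, 0 ≤ μ a) → (∑ a, μ a = 1) →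
    expUtil u (Function.update σ i μ) i ≤ expUtil u σ i

/-- Weak payoff monotonicity: differences in behavior reveal differences in payoffs. -/
def WeaklyPayoffMonotone (u : ∀ i : N, (∀ j, A j) → ℝ) (σ : ∀ i, A i → ℝ) : Prop :=
  IsStrategy σ ∧ ∀ (i : N) (ai bi : A i), σ i bi < σ i ai →
    devUtil u σ i bi < devUtil u σ i ai

/-- Payoff monotonicity. -/
def PayoffMonotone (u : ∀ i : N, (∀ j, A j) → ℝ) (σ : ∀ i, A i → ℝ) : Prop :=
  IsStrategy σ ∧ ∀ (i : N) (ai bi : A i),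
    σ i bi ≤ σ i ai ↔ devUtil u σ i bi ≤ devUtil u σ i ai

/-- Pointwise convergence of a sequence of profiles. -/
def ConvergesTo (s : ℕ → ∀ i, A i → ℝ) (σ : ∀ i, A i → ℝ) : Prop :=
  ∀ (i : N) (ai : A i), Tendsto (fun n => s n i ai) atTop (𝓝 (σ i ai))

/-- Empirical equilibrium: a Nash equilibrium that is the limit of weakly payoff
monotone profiles. -/
def IsEmpirical (u : ∀ i : N, (∀ j, A j) → ℝ) (σ : ∀ i, A i → ℝ) : Prop :=
  IsNash u σ ∧ ∃ s : ℕ → ∀ i, A i → ℝ,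
    (∀ n, WeaklyPayoffMonotone u (s n)) ∧ ConvergesTo s σ

/-- Proper equilibrium (Myerson). -/
def IsProper (u : ∀ i : N, (∀ j, A j) → ℝ) (σ : ∀ i, A i → ℝ) : Prop :=
  IsStrategy σ ∧ ∃ s : ℕ → ∀ i, A i → ℝ,
    (∀ n, IsStrategy (s n) ∧ Interior (s n) ∧
      ∀ (i : N) (ai bi : A i),
        devUtil u (s n) i bi < devUtil u (s n) i ai →
          s n i bi ≤ (1 / (n + 1) : ℝ) * s n i ai) ∧
    ConvergesTo s σ

/-- Perfect equilibrium (Selten, in Myerson's formulation). -/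
def IsPerfect (u : ∀ i : N, (∀ j, A j) → ℝ) (σ : ∀ i, A i → ℝ) : Prop :=
  IsStrategy σ ∧ ∃ s : ℕ → ∀ i, A i → ℝ,
    (∀ n, IsStrategy (s n) ∧ Interior (s n) ∧
      ∀ (i : N) (ai : A i), (1 / (n + 1) : ℝ) < s n i ai →
        ∀ bi : A i, devUtil u (s n) i bi ≤ devUtil u (s n) i ai) ∧
    ConvergesTo s σ

/-- `bi` weakly dominates `ai` for player `i`. -/
def WeaklyDominates (u : ∀ i : N, (∀ j, A j) → ℝ) (i : N) (bi ai : A i) : Prop :=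
  (∀ a : ∀ j, A j, u i (Function.update a i ai) ≤ u i (Function.update a i bi)) ∧
  ∃ a : ∀ j, A j, u i (Function.update a i ai) < u i (Function.update a i bi)

/-- Undominated Nash equilibrium. -/
def IsUndominatedNash (u : ∀ i : N, (∀ j, A j) → ℝ) (σ : ∀ i, A i → ℝ) : Prop :=
  IsNash u σ ∧ ∀ (i : N) (ai : A i), 0 < σ i ai →
    ¬ ∃ bi : A i, WeaklyDominates u i bi ai

end GameDefs

/-- A regular quantal response function on a finite set of actions `B`:
interiority, continuity, responsiveness, and monotonicity. -/
def IsRegularQRF {B : Type} [Fintype B] [DecidableEq B]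
    (p : (B → ℝ) → (B → ℝ)) : Prop :=
  (∀ x, (∀ a, 0 < p x a) ∧ ∑ a, p x a = 1) ∧
  Continuous p ∧
  (∀ (x : B → ℝ) (η : ℝ) (a : B), 0 < η →
    p x a < p (Function.update x a (x a + η)) a) ∧
  ∀ (x : B → ℝ) (a b : B), x b < x a → p x b < p x a

section QREDefs

variable {N : Type} [Fintype N] [DecidableEq N] {A : N → Type}
  [∀ i, Fintype (A i)] [∀ i, DecidableEq (A i)]

/-- Quantal response equilibrium with respect to a profile of QRFs `p`. -/
def IsQRE (u : ∀ i : N, (∀ j, A j) → ℝ) (p : ∀ i, (A i → ℝ) → (A i → ℝ))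
    (σ : ∀ i, A i → ℝ) : Prop :=
  ∀ i : N, σ i = p i (fun ai => devUtil u σ i ai)

/-- A sequence of profiles of QRFs is utility maximizing in the limit. -/
def UtilityMaximizingInLimit (u : ∀ i : N, (∀ j, A j) → ℝ)
    (p : ℕ → ∀ i, (A i → ℝ) → (A i → ℝ)) : Prop :=
  ∀ (s : ℕ → ∀ i, A i → ℝ) (σ : ∀ i, A i → ℝ),
    (∀ n, IsQRE u (p n) (s n)) → ConvergesTo s σ → IsNash u σ

/-- `σ` is approachable by regular QRE that are utility maximizing in the limit. -/
def ApproachableByRegularQRE (u : ∀ i : N, (∀ j, A j) → ℝ) (σ : ∀ i, A i → ℝ) : Prop :=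
  ∃ p : ℕ → ∀ i, (A i → ℝ) → (A i → ℝ),
    (∀ n i, IsRegularQRF (p n i)) ∧ UtilityMaximizingInLimit u p ∧
    ∃ s : ℕ → ∀ i, A i → ℝ, (∀ n, IsQRE u (p n) (s n)) ∧ ConvergesTo s σ

end QREDefs

/-- A control cost function (van Damme), bundled with its derivative on `(0,1]`. -/
structure ControlCost where
  f : ℝ → ℝ
  f' : ℝ → ℝ
  hasDeriv : ∀ x ∈ Set.Ioc (0:ℝ) 1, HasDerivWithinAt f (f' x) (Set.Ioc (0:ℝ) 1) x
  contDeriv : ContinuousOn f' (Set.Ioc (0:ℝ) 1)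
  anti : StrictAntiOn f (Set.Ioc (0:ℝ) 1)
  convex : StrictConvexOn ℝ (Set.Ioc (0:ℝ) 1) f
  atOne : f 1 = 0
  blowup : Tendsto f (nhdsWithin 0 (Set.Ioi (0:ℝ))) atTop

/-- The game Γ₂ᶜ (Table 2). Player `0` is player 1 (actions `0 = a1`, `1 = a2`,
`2 = a3`); player `1` is player 2 (actions `0 = b1`, `1 = b2`, `2 = b3`). -/
noncomputable def uGammaC (c1 c2 : ℝ) : ∀ _ : Fin 2, (Fin 2 → Fin 3) → ℝ := fun i a =>
  if i = 0 then
    ![![(1:ℝ), 0, -7 - c1], ![0, 0, -7], ![-7 - c1, -7, -7]] (a 0) (a 1)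
  else
    ![![(1:ℝ), 0, -7 - c2], ![0, 0, -7], ![-7 - c2, -7, -7]] (a 0) (a 1)

section Helpers

lemma expUtil_two (u : ∀ i : Fin 2, (Fin 2 → Fin 3) → ℝ) (σ : ∀ _ : Fin 2, Fin 3 → ℝ) (i : Fin 2) :
    expUtil u σ i = ∑ x : Fin 3, ∑ y : Fin 3, u i ![x, y] * (σ 0 x * σ 1 y) := by
  rw [expUtil]
  trans ∑ p : Fin 3 × Fin 3, u i ![p.1, p.2] * (σ 0 p.1 * σ 1 p.2)
  · apply Fintype.sum_equiv (piFinTwoEquiv fun _ => Fin 3)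
    intro a
    have h : ![a 0, a 1] = a := by funext j; fin_cases j <;> rfl
    simp [piFinTwoEquiv, Fin.prod_univ_two, h]
  · rw [Fintype.sum_prod_type]

end Helpers
section Helpers2

lemma devUtil_left (u : ∀ i : Fin 2, (Fin 2 → Fin 3) → ℝ) (σ : ∀ _ : Fin 2, Fin 3 → ℝ) (x : Fin 3) :
    devUtil u σ 0 x = ∑ y : Fin 3, u 0 ![x, y] * σ 1 y := by
  rw [devUtil, expUtil_two]
  rw [Finset.sum_comm]
  simp [Function.update, mul_ite, mul_zero, mul_one, ite_mul, zero_mul, one_mul,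
    Finset.sum_ite_eq', mul_comm]

lemma devUtil_right (u : ∀ i : Fin 2, (Fin 2 → Fin 3) → ℝ) (σ : ∀ _ : Fin 2, Fin 3 → ℝ) (y : Fin 3) :
    devUtil u σ 1 y = ∑ x : Fin 3, u 1 ![x, y] * σ 0 x := by
  rw [devUtil, expUtil_two]
  simp [Function.update, mul_ite, mul_zero, mul_one, ite_mul, zero_mul, one_mul,
    Finset.sum_ite_eq', mul_comm]

end Helpers2
section Helpers3
variable (c1 c2 : ℝ) (σ : ∀ _ : Fin 2, Fin 3 → ℝ)

lemma dG00 : devUtil (uGammaC c1 c2) σ 0 0 = σ 1 0 + (-7 - c1) * σ 1 2 := by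
  rw [devUtil_left]; simp [uGammaC, Fin.sum_univ_three, Matrix.vecHead, Matrix.vecTail]; try ring

lemma dG01 : devUtil (uGammaC c1 c2) σ 0 1 = -7 * σ 1 2 := by
  rw [devUtil_left]; simp [uGammaC, Fin.sum_univ_three, Matrix.vecHead, Matrix.vecTail]; try ring

lemma dG02 : devUtil (uGammaC c1 c2) σ 0 2 =
    (-7 - c1) * σ 1 0 + (-7) * σ 1 1 + (-7) * σ 1 2 := by
  rw [devUtil_left]; simp [uGammaC, Fin.sum_univ_three, Matrix.vecHead, Matrix.vecTail]; try ring

lemma dG10 : devUtil (uGammaC c1 c2) σ 1 0 = σ 0 0 + (-7 - c2) * σ 0 2 := by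
  rw [devUtil_right]; simp [uGammaC, Fin.sum_univ_three, Matrix.vecHead, Matrix.vecTail]; try ring

lemma dG11 : devUtil (uGammaC c1 c2) σ 1 1 = -7 * σ 0 2 := by
  rw [devUtil_right]; simp [uGammaC, Fin.sum_univ_three, Matrix.vecHead, Matrix.vecTail]; try ring

lemma dG12 : devUtil (uGammaC c1 c2) σ 1 2 =
    (-7 - c2) * σ 0 0 + (-7) * σ 0 1 + (-7) * σ 0 2 := by
  rw [devUtil_right]; simp [uGammaC, Fin.sum_univ_three, Matrix.vecHead, Matrix.vecTail]; try ring

lemma eG0 : expUtil (uGammaC c1 c2) σ 0 =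
    σ 0 0 * devUtil (uGammaC c1 c2) σ 0 0 + σ 0 1 * devUtil (uGammaC c1 c2) σ 0 1
      + σ 0 2 * devUtil (uGammaC c1 c2) σ 0 2 := by
  rw [expUtil_two, dG00, dG01, dG02]
  simp [uGammaC, Fin.sum_univ_three, Matrix.vecHead, Matrix.vecTail]; try ring

lemma eG1 : expUtil (uGammaC c1 c2) σ 1 =
    σ 1 0 * devUtil (uGammaC c1 c2) σ 1 0 + σ 1 1 * devUtil (uGammaC c1 c2) σ 1 1
      + σ 1 2 * devUtil (uGammaC c1 c2) σ 1 2 := by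
  rw [expUtil_two, dG10, dG11, dG12]
  simp [uGammaC, Fin.sum_univ_three, Matrix.vecHead, Matrix.vecTail]; try ring

lemma eGup0 (μ : Fin 3 → ℝ) : expUtil (uGammaC c1 c2) (Function.update σ 0 μ) 0 =
    μ 0 * devUtil (uGammaC c1 c2) σ 0 0 + μ 1 * devUtil (uGammaC c1 c2) σ 0 1
      + μ 2 * devUtil (uGammaC c1 c2) σ 0 2 := by
  rw [expUtil_two, dG00, dG01, dG02]
  simp [uGammaC, Fin.sum_univ_three, Matrix.vecHead, Matrix.vecTail, Function.update]; try ring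

lemma eGup1 (μ : Fin 3 → ℝ) : expUtil (uGammaC c1 c2) (Function.update σ 1 μ) 1 =
    μ 0 * devUtil (uGammaC c1 c2) σ 1 0 + μ 1 * devUtil (uGammaC c1 c2) σ 1 1
      + μ 2 * devUtil (uGammaC c1 c2) σ 1 2 := by
  rw [expUtil_two, dG10, dG11, dG12]
  simp [uGammaC, Fin.sum_univ_three, Matrix.vecHead, Matrix.vecTail, Function.update]; try ring

end Helpers3
section Helpers4
variable (c1 c2 : ℝ) (σ : ∀ _ : Fin 2, Fin 3 → ℝ)

lemma strat_sum3 (hσ : IsStrategy σ) (i : Fin 2) : σ i 0 + σ i 1 + σ i 2 = 1 := by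
  have := hσ.2 i; rwa [Fin.sum_univ_three] at this

lemma strat_pure0 (hσ : IsStrategy σ) (i : Fin 2) (h : σ i 0 = 1) :
    σ i 1 = 0 ∧ σ i 2 = 0 := by
  have hs := strat_sum3 σ hσ i
  have h1 := hσ.1 i 1; have h2 := hσ.1 i 2
  constructor <;> linarith

lemma strat_pure1 (hσ : IsStrategy σ) (i : Fin 2) (h : σ i 1 = 1) :
    σ i 0 = 0 ∧ σ i 2 = 0 := by
  have hs := strat_sum3 σ hσ i
  have h1 := hσ.1 i 0; have h2 := hσ.1 i 2
  constructor <;> linarith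

lemma fin3_cases (x : Fin 3) : x = 0 ∨ x = 1 ∨ x = 2 := by omega

-- a3 is weakly dominated by a2 (player 0)
lemma dom02 (hc1 : 0 < c1) : WeaklyDominates (uGammaC c1 c2) 0 1 2 := by
  constructor
  · intro a
    rcases fin3_cases (a 1) with h | h | h <;>
      simp [uGammaC, Function.update, h, Matrix.vecHead, Matrix.vecTail] <;> linarith
  · refine ⟨fun _ => 0, ?_⟩
    simp [uGammaC, Function.update]
    linarith

-- b3 is weakly dominated by b2 (player 1)
lemma dom12 (hc2 : 0 < c2) : WeaklyDominates (uGammaC c1 c2) 1 1 2 := by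
  constructor
  · intro a
    rcases fin3_cases (a 0) with h | h | h <;>
      simp [uGammaC, Function.update, h, Matrix.vecHead, Matrix.vecTail] <;> linarith
  · refine ⟨fun _ => 0, ?_⟩
    simp [uGammaC, Function.update]
    linarith

-- a1 is not weakly dominated
lemma notdom00 (hc1 : 0 < c1) : ¬ ∃ b, WeaklyDominates (uGammaC c1 c2) 0 b 0 := by
  rintro ⟨b, h1, a, h2⟩
  rcases fin3_cases b with hb | hb | hb <;> subst hb
  · exact absurd h2 (lt_irrefl _)
  · have := h1 (fun _ => 0); simp [uGammaC, Function.update] at this; linarith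
  · have := h1 (fun _ => 0); simp [uGammaC, Function.update] at this; linarith

-- a2 is not weakly dominated
lemma notdom01 (hc1 : 0 < c1) : ¬ ∃ b, WeaklyDominates (uGammaC c1 c2) 0 b 1 := by
  rintro ⟨b, h1, a, h2⟩
  rcases fin3_cases b with hb | hb | hb <;> subst hb
  · have := h1 (fun _ => 2); simp [uGammaC, Function.update] at this; linarith
  · exact absurd h2 (lt_irrefl _)
  · have := h1 (fun _ => 0); simp [uGammaC, Function.update] at this; linarith

-- b1 is not weakly dominated
lemma notdom10 (hc2 : 0 < c2) : ¬ ∃ b, WeaklyDominates (uGammaC c1 c2) 1 b 0 := by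
  rintro ⟨b, h1, a, h2⟩
  rcases fin3_cases b with hb | hb | hb <;> subst hb
  · exact absurd h2 (lt_irrefl _)
  · have := h1 (fun _ => 0); simp [uGammaC, Function.update] at this; linarith
  · have := h1 (fun _ => 0); simp [uGammaC, Function.update] at this; linarith

-- b2 is not weakly dominated
lemma notdom11 (hc2 : 0 < c2) : ¬ ∃ b, WeaklyDominates (uGammaC c1 c2) 1 b 1 := by
  rintro ⟨b, h1, a, h2⟩
  rcases fin3_cases b with hb | hb | hb <;> subst hb
  · have := h1 (fun _ => 2); simp [uGammaC, Function.update] at this; linarith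
  · exact absurd h2 (lt_irrefl _)
  · have := h1 (fun _ => 0); simp [uGammaC, Function.update] at this; linarith

lemma pq_cases (p q : ℝ) (hp0 : 0 ≤ p) (hp1 : p ≤ 1) (hq0 : 0 ≤ q) (hq1 : q ≤ 1)
    (h1 : p ≤ p * q) (h2 : q ≤ p * q) : (p = 1 ∧ q = 1) ∨ (p = 0 ∧ q = 0) := by
  have e1 : p * (q - 1) = 0 := le_antisymm (by nlinarith) (by nlinarith)
  have e2 : q * (p - 1) = 0 := le_antisymm (by nlinarith) (by nlinarith)
  rcases mul_eq_zero.1 e1 with hp | hq <;> rcases mul_eq_zero.1 e2 with hq' | hp'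
  · right; exact ⟨hp, hq'⟩
  · left; constructor <;> linarith
  · right; constructor <;> linarith
  · left; constructor <;> linarith

end Helpers4
section Helpers5
variable (c1 c2 : ℝ)

lemma fin2_cases (i : Fin 2) : i = 0 ∨ i = 1 := by omega

lemma indicator_props (x : Fin 3) :
    (∀ a : Fin 3, 0 ≤ (fun b => if b = x then (1:ℝ) else 0) a) ∧
      ∑ a : Fin 3, (fun b => if b = x then (1:ℝ) else 0) a = 1 := by
  constructor
  · intro a; dsimp; split <;> norm_num
  · rw [Fin.sum_univ_three]
    rcases fin3_cases x with h | h | h <;> subst h <;> simp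

lemma undomNash_iff (hc1 : 0 < c1) (hc2 : 0 < c2)
    (σ : ∀ _ : Fin 2, Fin 3 → ℝ) (hσ : IsStrategy σ) :
    IsUndominatedNash (uGammaC c1 c2) σ ↔
      ((σ 0 0 = 1 ∧ σ 1 0 = 1) ∨ (σ 0 1 = 1 ∧ σ 1 1 = 1)) := by
  constructor
  · rintro ⟨hN, hU⟩
    have h02 : σ 0 2 = 0 := by
      by_contra h
      have hpos : 0 < σ 0 2 := lt_of_le_of_ne (hσ.1 0 2) (Ne.symm h)
      exact hU 0 2 hpos ⟨1, dom02 c1 c2 hc1⟩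
    have h12 : σ 1 2 = 0 := by
      by_contra h
      have hpos : 0 < σ 1 2 := lt_of_le_of_ne (hσ.1 1 2) (Ne.symm h)
      exact hU 1 2 hpos ⟨1, dom12 c1 c2 hc2⟩
    have hq : σ 1 0 ≤ σ 0 0 * σ 1 0 := by
      have := hN.2 0 (fun b => if b = 0 then (1:ℝ) else 0)
        (indicator_props 0).1 (indicator_props 0).2
      rw [eGup0, eG0, dG00, dG01, dG02] at this
      simp only [if_pos rfl, if_neg (by decide : ¬(1:Fin 3) = 0), if_neg (by decide : ¬(2:Fin 3) = 0), if_true, one_mul, zero_mul, h02, h12] at this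
      linarith [this]
    have hp : σ 0 0 ≤ σ 0 0 * σ 1 0 := by
      have := hN.2 1 (fun b => if b = 0 then (1:ℝ) else 0)
        (indicator_props 0).1 (indicator_props 0).2
      rw [eGup1, eG1, dG10, dG11, dG12] at this
      simp only [if_pos rfl, if_neg (by decide : ¬(1:Fin 3) = 0), if_neg (by decide : ¬(2:Fin 3) = 0), if_true, one_mul, zero_mul, h02, h12] at this
      linarith [this]
    have hsum0 := strat_sum3 σ hσ 0
    have hsum1 := strat_sum3 σ hσ 1
    rcases pq_cases (σ 0 0) (σ 1 0) (hσ.1 0 0) (by linarith [hσ.1 0 1, hσ.1 0 2])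
      (hσ.1 1 0) (by linarith [hσ.1 1 1, hσ.1 1 2]) hp hq with ⟨h1, h2⟩ | ⟨h1, h2⟩
    · exact Or.inl ⟨h1, h2⟩
    · exact Or.inr ⟨by linarith, by linarith⟩
  · intro h
    constructor
    · -- Nash
      refine ⟨hσ, ?_⟩
      intro i μ hμ0 hμ1
      rw [Fin.sum_univ_three] at hμ1
      rcases h with ⟨h0, h1⟩ | ⟨h0, h1⟩
      · obtain ⟨h01, h02⟩ := strat_pure0 σ hσ 0 h0
        obtain ⟨h11, h12⟩ := strat_pure0 σ hσ 1 h1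
        rcases fin2_cases i with hi | hi <;> subst hi
        · rw [eGup0, eG0, dG00, dG01, dG02, h0, h01, h02, h1, h11, h12]
          nlinarith [hμ0 0, hμ0 1, hμ0 2]
        · rw [eGup1, eG1, dG10, dG11, dG12, h0, h01, h02, h1, h11, h12]
          nlinarith [hμ0 0, hμ0 1, hμ0 2]
      · obtain ⟨h00, h02⟩ := strat_pure1 σ hσ 0 h0
        obtain ⟨h10, h12⟩ := strat_pure1 σ hσ 1 h1
        rcases fin2_cases i with hi | hi <;> subst hi
        · rw [eGup0, eG0, dG00, dG01, dG02, h0, h00, h02, h1, h10, h12]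
          nlinarith [hμ0 0, hμ0 1, hμ0 2]
        · rw [eGup1, eG1, dG10, dG11, dG12, h0, h00, h02, h1, h10, h12]
          nlinarith [hμ0 0, hμ0 1, hμ0 2]
    · -- undominated
      intro i ai hpos
      rcases h with ⟨h0, h1⟩ | ⟨h0, h1⟩
      · obtain ⟨h01, h02⟩ := strat_pure0 σ hσ 0 h0
        obtain ⟨h11, h12⟩ := strat_pure0 σ hσ 1 h1
        rcases fin2_cases i with hi | hi <;> subst hi <;>
          rcases fin3_cases ai with ha | ha | ha <;> subst ha
        · exact notdom00 c1 c2 hc1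
        · rw [h01] at hpos; exact absurd hpos (lt_irrefl 0)
        · rw [h02] at hpos; exact absurd hpos (lt_irrefl 0)
        · exact notdom10 c1 c2 hc2
        · rw [h11] at hpos; exact absurd hpos (lt_irrefl 0)
        · rw [h12] at hpos; exact absurd hpos (lt_irrefl 0)
      · obtain ⟨h00, h02⟩ := strat_pure1 σ hσ 0 h0
        obtain ⟨h10, h12⟩ := strat_pure1 σ hσ 1 h1
        rcases fin2_cases i with hi | hi <;> subst hi <;>
          rcases fin3_cases ai with ha | ha | ha <;> subst ha
        · rw [h00] at hpos; exact absurd hpos (lt_irrefl 0)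
        · exact notdom01 c1 c2 hc1
        · rw [h02] at hpos; exact absurd hpos (lt_irrefl 0)
        · rw [h10] at hpos; exact absurd hpos (lt_irrefl 0)
        · exact notdom11 c1 c2 hc2
        · rw [h12] at hpos; exact absurd hpos (lt_irrefl 0)

end Helpers5
section Helpers6
variable (c1 c2 : ℝ)

lemma perfect_forward (hc1 : 0 < c1) (hc2 : 0 < c2)
    (σ : ∀ _ : Fin 2, Fin 3 → ℝ) (hσ : IsStrategy σ) :
    IsPerfect (uGammaC c1 c2) σ →
      ((σ 0 0 = 1 ∧ σ 1 0 = 1) ∨ (σ 0 1 = 1 ∧ σ 1 1 = 1)) := by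
  rintro ⟨-, s, hs, hconv⟩
  have hone : Tendsto (fun n : ℕ => 1 / ((n:ℝ) + 1)) atTop (𝓝 0) :=
    tendsto_one_div_add_atTop_nhds_zero_nat
  have hb02 : ∀ n, s n 0 2 ≤ 1 / ((n:ℝ) + 1) := by
    intro n
    by_contra hcon; push_neg at hcon
    have hkey := (hs n).2.2 0 2 hcon 1
    rw [dG01, dG02] at hkey
    have i10 := (hs n).2.1 1 0
    have i11 := (hs n).2.1 1 1
    nlinarith
  have hb12 : ∀ n, s n 1 2 ≤ 1 / ((n:ℝ) + 1) := by
    intro n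
    by_contra hcon; push_neg at hcon
    have hkey := (hs n).2.2 1 2 hcon 1
    rw [dG11, dG12] at hkey
    have i00 := (hs n).2.1 0 0
    have i01 := (hs n).2.1 0 1
    nlinarith
  have h02 : σ 0 2 = 0 :=
    le_antisymm (le_of_tendsto_of_tendsto' (hconv 0 2) hone hb02) (hσ.1 0 2)
  have h12 : σ 1 2 = 0 :=
    le_antisymm (le_of_tendsto_of_tendsto' (hconv 1 2) hone hb12) (hσ.1 1 2)
  have hsum0 := strat_sum3 σ hσ 0
  have hsum1 := strat_sum3 σ hσ 1
  have claim : 0 < σ 0 0 → σ 1 0 = 1 := by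
    intro hp
    by_contra hq
    have hq1 : σ 1 0 < 1 :=
      lt_of_le_of_ne (by linarith [hσ.1 1 1, hσ.1 1 2]) hq
    have h11pos : 0 < σ 1 1 := by linarith [hσ.1 1 1]
    have hev1 : ∀ᶠ n : ℕ in atTop, 1 / ((n:ℝ) + 1) < s n 1 1 := by
      have e1 := (hconv 1 1).eventually_const_lt
        (show σ 1 1 / 2 < σ 1 1 by linarith)
      have e2 := hone.eventually_lt_const (show (0:ℝ) < σ 1 1 / 2 by linarith)
      filter_upwards [e1, e2] with n hx hy; linarith
    have hev2 : ∀ᶠ n in atTop, s n 0 0 ≤ c2 * s n 0 2 := by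
      filter_upwards [hev1] with n hx
      have hkey := (hs n).2.2 1 1 hx 0
      rw [dG10, dG11] at hkey
      linarith
    have hfin : σ 0 0 ≤ c2 * σ 0 2 :=
      le_of_tendsto_of_tendsto (hconv 0 0) ((hconv 0 2).const_mul c2) hev2
    rw [h02, mul_zero] at hfin
    linarith
  have claim' : 0 < σ 1 0 → σ 0 0 = 1 := by
    intro hp
    by_contra hq
    have hq1 : σ 0 0 < 1 :=
      lt_of_le_of_ne (by linarith [hσ.1 0 1, hσ.1 0 2]) hq
    have h01pos : 0 < σ 0 1 := by linarith [hσ.1 0 1]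
    have hev1 : ∀ᶠ n : ℕ in atTop, 1 / ((n:ℝ) + 1) < s n 0 1 := by
      have e1 := (hconv 0 1).eventually_const_lt
        (show σ 0 1 / 2 < σ 0 1 by linarith)
      have e2 := hone.eventually_lt_const (show (0:ℝ) < σ 0 1 / 2 by linarith)
      filter_upwards [e1, e2] with n hx hy; linarith
    have hev2 : ∀ᶠ n in atTop, s n 1 0 ≤ c1 * s n 1 2 := by
      filter_upwards [hev1] with n hx
      have hkey := (hs n).2.2 0 1 hx 0
      rw [dG00, dG01] at hkey
      linarith
    have hfin : σ 1 0 ≤ c1 * σ 1 2 :=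
      le_of_tendsto_of_tendsto (hconv 1 0) ((hconv 1 2).const_mul c1) hev2
    rw [h12, mul_zero] at hfin
    linarith
  rcases lt_or_eq_of_le (hσ.1 0 0) with hp | hp
  · have hq := claim hp
    have hp1 := claim' (by rw [hq]; norm_num)
    exact Or.inl ⟨hp1, hq⟩
  · have hq : σ 1 0 = 0 := by
      by_contra h
      have := claim' (lt_of_le_of_ne (hσ.1 1 0) (Ne.symm h))
      rw [← hp] at this; norm_num at this
    exact Or.inr ⟨by linarith, by linarith⟩

end Helpers6
section Helpers7
variable (c1 c2 : ℝ)

lemma perfect_back1 (hc1 : 0 < c1) (hc2 : 0 < c2)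
    (σ : ∀ _ : Fin 2, Fin 3 → ℝ) (hσ : IsStrategy σ)
    (h0 : σ 0 0 = 1) (h1 : σ 1 0 = 1) : IsPerfect (uGammaC c1 c2) σ := by
  obtain ⟨h01, h02⟩ := strat_pure0 σ hσ 0 h0
  obtain ⟨h11, h12⟩ := strat_pure0 σ hσ 1 h1
  set δ : ℝ := min (1/(2+c1)) (min (1/(2+c2)) (1/4)) with hδ
  have hδpos : 0 < δ := lt_min (by positivity) (lt_min (by positivity) (by norm_num))
  have hδ1 : δ ≤ 1/(2+c1) := min_le_left _ _
  have hδ2 : δ ≤ 1/(2+c2) := le_trans (min_le_right _ _) (min_le_left _ _)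
  have hδ4 : δ ≤ 1/4 := le_trans (min_le_right _ _) (min_le_right _ _)
  set ε : ℕ → ℝ := fun n => min (1/((n:ℝ)+1)) δ with hε
  have hεpos : ∀ n, 0 < ε n := fun n => lt_min (by positivity) hδpos
  have hεn : ∀ n, ε n ≤ 1/((n:ℝ)+1) := fun n => min_le_left _ _
  have hεδ : ∀ n, ε n ≤ δ := fun n => min_le_right _ _
  have hε4 : ∀ n, ε n ≤ 1/4 := fun n => le_trans (hεδ n) hδ4
  have hεc1 : ∀ n, ε n * (2 + c1) ≤ 1 := fun n =>
    (le_div_iff₀ (by linarith)).1 (le_trans (hεδ n) hδ1)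
  have hεc2 : ∀ n, ε n * (2 + c2) ≤ 1 := fun n =>
    (le_div_iff₀ (by linarith)).1 (le_trans (hεδ n) hδ2)
  have hε0 : Tendsto ε atTop (𝓝 0) :=
    squeeze_zero (fun n => (hεpos n).le) hεn tendsto_one_div_add_atTop_nhds_zero_nat
  refine ⟨hσ, fun n _ a => if a = 0 then 1 - 2 * ε n else ε n, ?_, ?_⟩
  · intro n
    refine ⟨⟨?_, ?_⟩, ?_, ?_⟩
    · intro i a; dsimp only; split <;> [linarith [hε4 n]; linarith [hεpos n]]
    · intro i; rw [Fin.sum_univ_three]; simp; ring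
    · intro i a; dsimp only; split <;> [linarith [hε4 n]; exact hεpos n]
    · intro i ai hlt bi
      rcases fin3_cases ai with ha | ha | ha
      · subst ha
        rcases fin2_cases i with hi | hi <;> subst hi <;>
          rcases fin3_cases bi with hb | hb | hb <;> subst hb
        · exact le_refl _
        · rw [dG00, dG01]; simp; nlinarith [hεc1 n, hεpos n]
        · rw [dG00, dG02]; simp
          nlinarith [hε4 n, hεpos n, mul_nonneg hc1.le (by linarith [hε4 n] : (0:ℝ) ≤ 1 - 3 * ε n)]
        · exact le_refl _
        · rw [dG10, dG11]; simp; nlinarith [hεc2 n, hεpos n]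
        · rw [dG10, dG12]; simp
          nlinarith [hε4 n, hεpos n, mul_nonneg hc2.le (by linarith [hε4 n] : (0:ℝ) ≤ 1 - 3 * ε n)]
      · subst ha; simp at hlt
        have hh := hεn n; rw [one_div] at hh; linarith
      · subst ha; simp at hlt
        have hh := hεn n; rw [one_div] at hh; linarith
  · intro i ai
    rcases fin3_cases ai with ha | ha | ha <;> subst ha <;>
      rcases fin2_cases i with hi | hi <;> subst hi <;> simp
    · rw [h0]
      have hh : Tendsto (fun n => 1 - 2 * ε n) atTop (𝓝 (1 - 2 * 0)) :=
        tendsto_const_nhds.sub (hε0.const_mul 2)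
      rw [show (1:ℝ) - 2 * 0 = 1 by norm_num] at hh
      exact hh
    · rw [h1]
      have hh : Tendsto (fun n => 1 - 2 * ε n) atTop (𝓝 (1 - 2 * 0)) :=
        tendsto_const_nhds.sub (hε0.const_mul 2)
      rw [show (1:ℝ) - 2 * 0 = 1 by norm_num] at hh
      exact hh
    · rw [h01]; exact hε0
    · rw [h11]; exact hε0
    · rw [h02]; exact hε0
    · rw [h12]; exact hε0

end Helpers7
section Helpers8
variable (c1 c2 : ℝ)

lemma perfect_back2 (hc1 : 0 < c1) (hc2 : 0 < c2)
    (σ : ∀ _ : Fin 2, Fin 3 → ℝ) (hσ : IsStrategy σ)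
    (h0 : σ 0 1 = 1) (h1 : σ 1 1 = 1) : IsPerfect (uGammaC c1 c2) σ := by
  obtain ⟨h00, h02⟩ := strat_pure1 σ hσ 0 h0
  obtain ⟨h10, h12⟩ := strat_pure1 σ hσ 1 h1
  set τ : ℝ := min c1 (min c2 1) / 2 with hτdef
  have hτpos : 0 < τ := by
    have : 0 < min c1 (min c2 1) := lt_min hc1 (lt_min hc2 one_pos)
    positivity
  have hτ1 : τ ≤ c1 := by
    have : min c1 (min c2 1) ≤ c1 := min_le_left _ _
    rw [hτdef]; linarith
  have hτ2 : τ ≤ c2 := by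
    have : min c1 (min c2 1) ≤ c2 := le_trans (min_le_right _ _) (min_le_left _ _)
    rw [hτdef]; linarith
  have hτh : τ ≤ 1/2 := by
    have : min c1 (min c2 1) ≤ 1 := le_trans (min_le_right _ _) (min_le_right _ _)
    rw [hτdef]; linarith
  set ε : ℕ → ℝ := fun n => min (1/((n:ℝ)+1)) (1/4) with hε
  have hεpos : ∀ n, 0 < ε n := fun n => lt_min (by positivity) (by norm_num)
  have hεn : ∀ n, ε n ≤ 1/((n:ℝ)+1) := fun n => min_le_left _ _
  have hε4 : ∀ n, ε n ≤ 1/4 := fun n => min_le_right _ _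
  have hε0 : Tendsto ε atTop (𝓝 0) :=
    squeeze_zero (fun n => (hεpos n).le) hεn tendsto_one_div_add_atTop_nhds_zero_nat
  refine ⟨hσ, fun n _ a =>
    if a = 0 then τ * ε n else if a = 1 then 1 - (1 + τ) * ε n else ε n, ?_, ?_⟩
  · intro n
    have hτε : τ * ε n ≤ ε n := by nlinarith [hεpos n]
    have hm : (5:ℝ)/8 ≤ 1 - (1 + τ) * ε n := by nlinarith [hεpos n, hε4 n]
    refine ⟨⟨?_, ?_⟩, ?_, ?_⟩
    · intro i a; dsimp only; split
      · positivity
      · split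
        · linarith
        · linarith [hεpos n]
    · intro i; rw [Fin.sum_univ_three]; simp; ring
    · intro i a; dsimp only; split
      · positivity
      · split
        · linarith
        · exact hεpos n
    · intro i ai hlt bi
      rcases fin3_cases ai with ha | ha | ha
      · subst ha; simp at hlt
        have hh := hεn n; rw [one_div] at hh; linarith
      · subst ha
        rcases fin2_cases i with hi | hi <;> subst hi <;>
          rcases fin3_cases bi with hb | hb | hb <;> subst hb
        · rw [dG00, dG01]; simp
          nlinarith [mul_nonneg (by linarith : (0:ℝ) ≤ c1 - τ) (hεpos n).le]
        · exact le_refl _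
        · rw [dG02, dG01]; simp
          nlinarith [mul_nonneg (mul_nonneg hc1.le hτpos.le) (hεpos n).le,
            mul_nonneg hτpos.le (hεpos n).le, hε4 n, hεpos n]
        · rw [dG10, dG11]; simp
          nlinarith [mul_nonneg (by linarith : (0:ℝ) ≤ c2 - τ) (hεpos n).le]
        · exact le_refl _
        · rw [dG12, dG11]; simp
          nlinarith [mul_nonneg (mul_nonneg hc2.le hτpos.le) (hεpos n).le,
            mul_nonneg hτpos.le (hεpos n).le, hε4 n, hεpos n]
      · subst ha; simp at hlt
        have hh := hεn n; rw [one_div] at hh; linarith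
  · intro i ai
    rcases fin3_cases ai with ha | ha | ha <;> subst ha <;>
      rcases fin2_cases i with hi | hi <;> subst hi <;> simp
    · rw [h00]
      have hh : Tendsto (fun n => τ * ε n) atTop (𝓝 (τ * 0)) := hε0.const_mul τ
      rw [mul_zero] at hh; exact hh
    · rw [h10]
      have hh : Tendsto (fun n => τ * ε n) atTop (𝓝 (τ * 0)) := hε0.const_mul τ
      rw [mul_zero] at hh; exact hh
    · rw [h0]
      have hh : Tendsto (fun n => 1 - (1 + τ) * ε n) atTop (𝓝 (1 - (1 + τ) * 0)) :=
        tendsto_const_nhds.sub (hε0.const_mul (1 + τ))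
      rw [show (1:ℝ) - (1 + τ) * 0 = 1 by ring] at hh; exact hh
    · rw [h1]
      have hh : Tendsto (fun n => 1 - (1 + τ) * ε n) atTop (𝓝 (1 - (1 + τ) * 0)) :=
        tendsto_const_nhds.sub (hε0.const_mul (1 + τ))
      rw [show (1:ℝ) - (1 + τ) * 0 = 1 by ring] at hh; exact hh
    · rw [h02]; exact hε0
    · rw [h12]; exact hε0

end Helpers8

/-- for every c1, c2 > 0, the perfect equilibria and the undominated
Nash equilibria of Γ₂ᶜ are exactly the pure profiles (a1,b1) and (a2,b2). -/
theorem gammaC_perfect_and_undominated (c1 c2 : ℝ) (hc1 : 0 < c1) (hc2 : 0 < c2)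
    (σ : ∀ _ : Fin 2, Fin 3 → ℝ) (hσ : IsStrategy σ) :
    (IsPerfect (uGammaC c1 c2) σ ↔
      ((σ 0 0 = 1 ∧ σ 1 0 = 1) ∨ (σ 0 1 = 1 ∧ σ 1 1 = 1))) ∧
    (IsUndominatedNash (uGammaC c1 c2) σ ↔
      ((σ 0 0 = 1 ∧ σ 1 0 = 1) ∨ (σ 0 1 = 1 ∧ σ 1 1 = 1))) := by
  constructor
  · constructor
    · exact perfect_forward c1 c2 hc1 hc2 σ hσ
    · rintro (⟨h0, h1⟩ | ⟨h0, h1⟩)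
      · exact perfect_back1 c1 c2 hc1 hc2 σ hσ h0 h1
      · exact perfect_back2 c1 c2 hc1 hc2 σ hσ h0 h1
  · exact undomNash_iff c1 c2 hc1 hc2 σ hσ
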